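/- arXiv:2206.05925 — 2 statements merged into one kernel-verified Lean document; each statement's English description precedes it below -/
import Mathlib

section
/- Let b ∈ ℂ and let δ : Vir × Vir → F_b be a skew-symmetric biderivation. Then δ(x, C) = 0 for all x ∈ Vir, and there exists λ ∈ ℂ such that δ(L_m, L_n) = λ(m − n)v_{m+n} for all m, n ∈ ℤ if b = −1, while δ(L_m, L_n) = 0 for all m, n ∈ ℤ if b ≠ −1. -/
/-!
Each slot of a biderivation `δ` is a derivation into `F_b`. Since `C` is central and acts trivially
on `F_b`, the identity for `δ(y, [x, C])` shows that `δ(y, C)` is annihilated by `Vir`, hence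
`δ([x, y], C) = 0`; every `L_k` is a bracket modulo `C`, so `δ(·, C) = 0`. Next, `δ(L_m, L_0)` has
`L_0`-weight `-m`, so it is a multiple of `v_m`, and the biderivation identity then puts every
`δ(L_m, L_n)` in `ℂ v_{m+n}`. For the coefficients `φ(m, n)` the identity on `(L_m, L_0, L_p)` reads
`p φ(m, p) = -(p + b m) φ(p, 0)`; with skew-symmetry it gives
`m (p + b m) φ(p, 0) + p (m + b p) φ(m, 0) = 0`. Taking `m = 1` forces `φ(p, 0) = p φ(1, 0)` when
`b = -1`, and taking `p = m` forces `φ(m, 0) = 0` when `b ≠ -1`.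
-/

open Module

theorem eq_zero_of_eq_neg_of_charZero {K M : Type*} [Field K] [CharZero K] [AddCommGroup M]
    [Module K M] {x : M} (h : x = -x) : x = 0 := by
  have h2 : (2 : K) • x = 0 := by rw [two_smul]; exact eq_neg_iff_add_eq_zero.mp h
  exact (smul_eq_zero.mp h2).resolve_left two_ne_zero

theorem LieModule.lie_eq_zero_of_forall_lie_basis {ι R L M : Type*} [CommRing R] [LieRing L]
    [LieAlgebra R L] [AddCommGroup M] [Module R M] [LieRingModule L M] [LieModule R L M]
    (B : Basis ι R M) {x : L} (h : ∀ i, ⁅x, B i⁆ = 0) (w : M) : ⁅x, w⁆ = 0 := by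
  have hx : LieModule.toEnd R L M x = 0 := B.ext fun i => by simpa using h i
  simpa using LinearMap.congr_fun hx w

namespace Module.Basis

variable {ι K M : Type*}

theorem repr_apply_eq_mul_of_apply_basis_eq_smul [CommSemiring K] [AddCommMonoid M] [Module K M]
    (B : Basis ι K M) {T : M →ₗ[K] M} {f : ι → K} (hT : ∀ i, T (B i) = f i • B i)
    (w : M) (j : ι) : B.repr (T w) j = f j * B.repr w j := by
  have hcoord : B.coord j ∘ₗ T = f j • B.coord j := B.ext fun i => by
    classical
    simp only [LinearMap.comp_apply, hT, map_smul, coord_apply, repr_self, LinearMap.smul_apply,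
      smul_eq_mul, Finsupp.single_apply]
    split_ifs with h
    · rw [h]
    · simp
  simpa using LinearMap.congr_fun hcoord w

theorem eq_repr_smul_of_apply_eq_smul [CommRing K] [IsDomain K] [AddCommGroup M] [Module K M]
    (B : Basis ι K M) {T : M →ₗ[K] M} {f : ι → K} (hf : Function.Injective f)
    (hT : ∀ i, T (B i) = f i • B i) {w : M} {i : ι} (hw : T w = f i • w) :
    w = B.repr w i • B i := by
  classical
  apply B.repr.injective
  ext j
  rw [map_smul, repr_self, Finsupp.smul_apply, Finsupp.single_apply]
  split_ifs with hij
  · rw [hij, smul_eq_mul, mul_one]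
  · rw [smul_zero]
    have hcoord := B.repr_apply_eq_mul_of_apply_basis_eq_smul hT w j
    rw [hw, map_smul, Finsupp.smul_apply, smul_eq_mul] at hcoord
    have : (f i - f j) * B.repr w j = 0 := by linear_combination hcoord
    exact (mul_eq_zero.mp this).resolve_left (sub_ne_zero.mpr (hf.ne hij))

end Module.Basis

theorem biderivation_apply_lie_eq_zero_of_central {L M : Type*} [LieRing L] [AddCommGroup M]
    [LieRingModule L M] (δ : L → L → M)
    (hbd1 : ∀ x y z : L, δ ⁅x, y⁆ z = ⁅x, δ y z⁆ - ⁅y, δ x z⁆)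
    (hbd2 : ∀ x y z : L, δ x ⁅y, z⁆ = ⁅y, δ x z⁆ - ⁅z, δ x y⁆)
    {x y z : L} (hx : ⁅x, z⁆ = 0) (hy : ⁅y, z⁆ = 0) (hz : ∀ w : M, ⁅z, w⁆ = 0) :
    δ ⁅x, y⁆ z = 0 := by
  have hzero : ∀ t : L, δ t 0 = 0 := fun t => by simpa using hbd2 t 0 0
  have hkill : ∀ {u : L}, ⁅u, z⁆ = 0 → ∀ t : L, ⁅u, δ t z⁆ = 0 := fun {u} hu t => by
    have h := hbd2 t u z
    rwa [hu, hz, sub_zero, hzero, eq_comm] at h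
  rw [hbd1, hkill hx, hkill hy, sub_zero]

/-- Coefficients `δ(L_m, L_n) = φ m n • v_{m+n}` of a skew-symmetric biderivation into `F_b`;
`lie_zero` is the biderivation identity for `(L_m, L_0, L_p)`. -/
structure IsSkewBiderivationCoeff (b : ℂ) (φ : ℤ → ℤ → ℂ) : Prop where
  skew : ∀ m n, φ m n = -φ n m
  lie_zero : ∀ m p : ℤ, (p : ℂ) * φ m p = -(((p : ℂ) + b * m) * φ p 0)

namespace IsSkewBiderivationCoeff

variable {b : ℂ} {φ : ℤ → ℤ → ℂ}

theorem cross (h : IsSkewBiderivationCoeff b φ) (m p : ℤ) :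
    (m : ℂ) * (p + b * m) * φ p 0 + p * (m + b * p) * φ m 0 = 0 := by
  linear_combination (m : ℂ) * h.lie_zero m p + (p : ℂ) * h.lie_zero p m
    - (m : ℂ) * (p : ℂ) * h.skew m p

theorem zero_zero (h : IsSkewBiderivationCoeff b φ) : φ 0 0 = 0 := by
  linear_combination h.skew 0 0 / 2

theorem apply_zero_of_eq_neg_one (h : IsSkewBiderivationCoeff (-1) φ) (p : ℤ) :
    φ p 0 = p * φ 1 0 := by
  rcases eq_or_ne p 1 with rfl | hp
  · simp
  · have hp' : (1 : ℂ) - p ≠ 0 := sub_ne_zero.mpr (by exact_mod_cast hp.symm)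
    apply mul_left_cancel₀ hp'
    linear_combination -h.cross 1 p

theorem eq_of_eq_neg_one (h : IsSkewBiderivationCoeff (-1) φ) (m n : ℤ) :
    φ m n = φ 1 0 * (m - n) := by
  rcases eq_or_ne n 0 with rfl | hn
  · rw [h.apply_zero_of_eq_neg_one]; simp [mul_comm]
  · apply mul_left_cancel₀ (Int.cast_ne_zero.mpr hn : (n : ℂ) ≠ 0)
    linear_combination h.lie_zero m n + (m - n) * h.apply_zero_of_eq_neg_one n

theorem apply_zero_eq_zero_of_ne_neg_one (h : IsSkewBiderivationCoeff b φ) (hb : b ≠ -1)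
    (m : ℤ) : φ m 0 = 0 := by
  rcases eq_or_ne m 0 with rfl | hm
  · exact h.zero_zero
  · have hb' : (1 : ℂ) + b ≠ 0 := fun h' => hb (by linear_combination h')
    have hm' : (m : ℂ) ≠ 0 := by exact_mod_cast hm
    apply mul_left_cancel₀ (mul_ne_zero (mul_ne_zero (mul_ne_zero two_ne_zero hm') hm') hb')
    linear_combination h.cross m m

theorem eq_zero_of_ne_neg_one (h : IsSkewBiderivationCoeff b φ) (hb : b ≠ -1) (m n : ℤ) :
    φ m n = 0 := by
  rcases eq_or_ne n 0 with rfl | hn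
  · exact h.apply_zero_eq_zero_of_ne_neg_one hb m
  · apply mul_left_cancel₀ (Int.cast_ne_zero.mpr hn : (n : ℂ) ≠ 0)
    rw [h.lie_zero, h.apply_zero_eq_zero_of_ne_neg_one hb n, mul_zero, neg_zero, mul_zero]

end IsSkewBiderivationCoeff

section DensityModule

variable {V M : Type*} [LieRing V] [LieAlgebra ℂ V] [AddCommGroup M] [Module ℂ M]
  [LieRingModule V M] [LieModule ℂ V M] {b : ℂ} {L : ℤ → V} {bM : Basis ℤ ℂ M}
  {D : ℤ → ℤ → M}

theorem apply_zero_eq_repr_smul_of_biderivation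
    (hLv : ∀ m i : ℤ, ⁅L m, bM i⁆ = (-((i : ℂ) + b * m)) • bM (m + i))
    (hD : ∀ m n p : ℤ, ((m : ℂ) - n) • D (m + n) p = ⁅L m, D n p⁆ - ⁅L n, D m p⁆)
    (hskew : ∀ m n, D m n = -D n m) (m : ℤ) :
    D m 0 = bM.repr (D m 0) m • bM m := by
  have hweight : ⁅L 0, D m 0⁆ = (-(m : ℂ)) • D m 0 := by
    have h := hD 0 m 0
    rw [zero_add, eq_zero_of_eq_neg_of_charZero (K := ℂ) (hskew 0 0), lie_zero, sub_zero] at h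
    simpa using h.symm
  refine bM.eq_repr_smul_of_apply_eq_smul (T := LieModule.toEnd ℂ V M (L 0))
    (f := fun i : ℤ => -(i : ℂ)) ?_ (fun i => ?_) hweight
  · exact neg_injective.comp Int.cast_injective
  · simpa using hLv 0 i

theorem eq_repr_smul_of_biderivation
    (hLv : ∀ m i : ℤ, ⁅L m, bM i⁆ = (-((i : ℂ) + b * m)) • bM (m + i))
    (hD : ∀ m n p : ℤ, ((m : ℂ) - n) • D (m + n) p = ⁅L m, D n p⁆ - ⁅L n, D m p⁆)
    (hskew : ∀ m n, D m n = -D n m) (m n : ℤ) :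
    D m n = bM.repr (D m n) (m + n) • bM (m + n) := by
  suffices ∃ s : ℂ, D m n = s • bM (m + n) by
    obtain ⟨s, hs⟩ := this
    simp [hs]
  rcases eq_or_ne m n with rfl | hmn
  · exact ⟨0, by rw [eq_zero_of_eq_neg_of_charZero (K := ℂ) (hskew m m), zero_smul]⟩
  have hmn' : (m : ℂ) - n ≠ 0 := sub_ne_zero.mpr (by exact_mod_cast hmn)
  have hsum : ((m : ℂ) - n) • D m n = ⁅L m, D 0 n⁆ - ⁅L n, D m 0⁆ := by
    have hA := hD 0 m n
    have hB := hD 0 n m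
    simp only [zero_add, Int.cast_zero, zero_sub] at hA hB
    rw [hskew n m, hskew 0 m, lie_neg, lie_neg] at hB
    linear_combination (norm := module) -(hA + hB)
  rw [hskew 0 n, apply_zero_eq_repr_smul_of_biderivation hLv hD hskew n,
    apply_zero_eq_repr_smul_of_biderivation hLv hD hskew m, lie_neg, lie_smul, lie_smul, hLv, hLv,
    add_comm n m] at hsum
  refine ⟨((m : ℂ) - n)⁻¹ * (bM.repr (D n 0) n * (n + b * m) + bM.repr (D m 0) m * (m + b * n)),
    ?_⟩
  rw [← inv_smul_smul₀ hmn' (D m n), hsum, mul_smul]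
  module

theorem isSkewBiderivationCoeff_of_biderivation
    (hLv : ∀ m i : ℤ, ⁅L m, bM i⁆ = (-((i : ℂ) + b * m)) • bM (m + i))
    (hD : ∀ m n p : ℤ, ((m : ℂ) - n) • D (m + n) p = ⁅L m, D n p⁆ - ⁅L n, D m p⁆)
    (hskew : ∀ m n, D m n = -D n m) :
    IsSkewBiderivationCoeff b (fun m n => bM.repr (D m n) (m + n)) where
  skew m n := by rw [hskew m n, add_comm m n, map_neg, Finsupp.neg_apply]
  lie_zero m p := by
    have h := hD m 0 p
    rw [add_zero, hskew 0 p, eq_repr_smul_of_biderivation hLv hD hskew p 0,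
      eq_repr_smul_of_biderivation hLv hD hskew m p, lie_neg, lie_smul, lie_smul, hLv, hLv,
      add_zero, zero_add] at h
    have hcoeff := congrArg (fun w => bM.repr w (m + p)) h
    simp only [Int.cast_zero, sub_zero, map_smul, map_sub, map_neg, Basis.repr_self,
      Finsupp.smul_single, Finsupp.single_neg, Finsupp.coe_sub, Finsupp.coe_neg, Finsupp.coe_smul,
      Pi.sub_apply, Pi.neg_apply, Pi.smul_apply, Finsupp.single_eq_same, smul_eq_mul, mul_one,
      Int.cast_add, mul_zero, add_zero] at hcoeff
    show (p : ℂ) * _ = -(_ * bM.repr (D p 0) (p + 0))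
    rw [add_zero]
    linear_combination -hcoeff

end DensityModule

theorem virasoro_biderivation_apply_central_eq_zero {V M : Type*} [LieRing V] [LieAlgebra ℂ V]
    [AddCommGroup M] [Module ℂ M] [LieRingModule V M] [LieModule ℂ V M]
    (bV : Basis (ℤ ⊕ Unit) ℂ V) {L : ℤ → V} {Cc : V}
    (hLdef : ∀ m : ℤ, L m = bV (Sum.inl m)) (hCdef : Cc = bV (Sum.inr ()))
    (hLL : ∀ m n : ℤ, ⁅L m, L n⁆ = ((m : ℂ) - n) • L (m + n) +
      (if m + n = 0 then ((m : ℂ) ^ 3 - m) / 12 else 0) • Cc)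
    (hLC : ∀ m : ℤ, ⁅L m, Cc⁆ = 0) (hCM : ∀ w : M, ⁅Cc, w⁆ = 0) (δ : V →ₗ[ℂ] V →ₗ[ℂ] M)
    (hbd1 : ∀ x y z : V, δ ⁅x, y⁆ z = ⁅x, δ y z⁆ - ⁅y, δ x z⁆)
    (hbd2 : ∀ x y z : V, δ x ⁅y, z⁆ = ⁅y, δ x z⁆ - ⁅z, δ x y⁆)
    (hskew : ∀ x y : V, δ x y = -δ y x) (x : V) :
    δ x Cc = 0 := by
  have hCC : δ Cc Cc = 0 := eq_zero_of_eq_neg_of_charZero (K := ℂ) (hskew Cc Cc)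
  have hLkC : ∀ k : ℤ, δ (L k) Cc = 0 := fun k => by
    -- `k = (2k + 1) + (-k - 1)` with `(2k + 1) - (-k - 1) = 3k + 2 ≠ 0`
    obtain ⟨m, n, hmn, rfl⟩ : ∃ m n : ℤ, m ≠ n ∧ m + n = k :=
      ⟨2 * k + 1, -k - 1, by omega, by omega⟩
    have h := biderivation_apply_lie_eq_zero_of_central (δ · ·) hbd1 hbd2 (hLC m) (hLC n) hCM
    rw [hLL, map_add, map_smul, map_smul, LinearMap.add_apply, LinearMap.smul_apply,
      LinearMap.smul_apply, hCC, smul_zero, add_zero] at h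
    exact (smul_eq_zero.mp h).resolve_left (sub_ne_zero.mpr (by exact_mod_cast hmn))
  have hflip : δ.flip Cc = 0 := bV.ext fun
    | .inl m => by simpa [← hLdef] using hLkC m
    | .inr () => by simpa [← hCdef] using hCC
  exact LinearMap.congr_fun hflip x

theorem skew_biderivation_Vir_density
(b : ℂ)
    (V : Type) [LieRing V] [LieAlgebra ℂ V]
    (bV : Module.Basis (ℤ ⊕ Unit) ℂ V)
    (L : ℤ → V) (Cc : V)
    (hLdef : ∀ m : ℤ, L m = bV (Sum.inl m))
    (hCdef : Cc = bV (Sum.inr ()))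
    (hLL : ∀ m n : ℤ, ⁅L m, L n⁆ = ((m : ℂ) - n) • L (m + n) +
      (if m + n = 0 then ((m : ℂ) ^ 3 - m) / 12 else 0) • Cc)
    (hLC : ∀ m : ℤ, ⁅L m, Cc⁆ = 0)
    (M : Type) [AddCommGroup M] [Module ℂ M] [LieRingModule V M] [LieModule ℂ V M]
    (bM : Module.Basis ℤ ℂ M) (v : ℤ → M) (hvdef : ∀ i : ℤ, v i = bM i)
    (hLv : ∀ m i : ℤ, ⁅L m, v i⁆ = (-((i : ℂ) + b * m)) • v (m + i))
    (hCv : ∀ i : ℤ, ⁅Cc, v i⁆ = 0)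
    (δ : V →ₗ[ℂ] V →ₗ[ℂ] M)
    (hbd1 : ∀ x y z : V, δ ⁅x, y⁆ z = ⁅x, δ y z⁆ - ⁅y, δ x z⁆)
    (hbd2 : ∀ x y z : V, δ x ⁅y, z⁆ = ⁅y, δ x z⁆ - ⁅z, δ x y⁆)
    (hskewsym : ∀ x y : V, δ x y = -δ y x) :
    (∀ x : V, δ x Cc = 0) ∧
    (b = -1 → ∃ lam : ℂ, ∀ m n : ℤ, δ (L m) (L n) = (lam * ((m : ℂ) - n)) • v (m + n)) ∧
    (b ≠ -1 → ∀ m n : ℤ, δ (L m) (L n) = 0) := by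
  obtain rfl : v = bM := funext hvdef
  have hCM : ∀ w : M, ⁅Cc, w⁆ = 0 := LieModule.lie_eq_zero_of_forall_lie_basis bM hCv
  have hxC : ∀ x, δ x Cc = 0 := virasoro_biderivation_apply_central_eq_zero bV hLdef hCdef hLL
    hLC hCM δ hbd1 hbd2 hskewsym
  have hD : ∀ m n p : ℤ, ((m : ℂ) - n) • δ (L (m + n)) (L p) =
      ⁅L m, δ (L n) (L p)⁆ - ⁅L n, δ (L m) (L p)⁆ := fun m n p => by
    have h := hbd1 (L m) (L n) (L p)
    rwa [hLL, map_add, map_smul, map_smul, LinearMap.add_apply, LinearMap.smul_apply,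
      LinearMap.smul_apply, hskewsym Cc, hxC, neg_zero, smul_zero, add_zero] at h
  have hskewL : ∀ m n : ℤ, δ (L m) (L n) = -δ (L n) (L m) := fun m n => hskewsym _ _
  have hφ := isSkewBiderivationCoeff_of_biderivation hLv hD hskewL
  refine ⟨hxC, fun hb => ?_, fun hb m n => ?_⟩
  · subst hb
    exact ⟨_, fun m n => (eq_repr_smul_of_biderivation hLv hD hskewL m n).trans
      (congrArg (· • bM (m + n)) (hφ.eq_of_eq_neg_one m n))⟩
  · rw [eq_repr_smul_of_biderivation hLv hD hskewL m n, hφ.eq_zero_of_ne_neg_one hb m n, zero_smul]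
end

section
/- Every symmetric super-biderivation φ of the super Virasoro algebra SVir (homogeneous of either ℤ/2-degree, with SVir acting on itself by the adjoint action) is trivial, i.e. φ(x, y) = 0 for all x, y ∈ SVir. -/
/-!
Since `C` is central, the biderivation identities make every value `φ(x, C)` central and give
`φ([x, y], C) = 0`; as SVir is perfect, `φ(·, C) = 0`. Supersymmetry gives `φ(G₀, G₀) = 0`, and the
identity for `[G₀, G₀] = 2L₀ - C/12` then gives `φ(L₀, L₀) = φ(L₀, G₀) = 0`. Hence `φ(L₀, ·)`
preserves the weights of `ad L₀`, whose weight spaces away from weight `0` are one-dimensional in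
each parity, so `φ(L₀, L_n)` and `φ(L₀, G_r)` are multiples of single basis vectors. Expanding
`φ(L₀, [G_r, G_s])` turns these multiples into a functional equation that forces them to vanish
(for even `φ` together with one more identity, for `L₁` and `L₂`). Once `φ(L₀, ·) = 0`, the
identities for `[L₀, ·]` kill `φ` on basis vectors of different weights, and writing a basis vector
of the same weight as a bracket `[L_m, ·]` of vectors of other weights kills the rest.
-/

open Submodule

namespace Module.Basis

variable {ι R M : Type*}

section Semiring

variable [Semiring R] [AddCommMonoid M] [Module R M] (b : Basis ι R M)

theorem repr_eq_zero_of_mem_span_image {s : Set ι} {u : M} (hu : u ∈ span R (b '' s)) {i : ι}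
    (hi : i ∉ s) : b.repr u i = 0 :=
  Finsupp.notMem_support_iff.mp fun h => hi (b.mem_span_image.mp hu h)

theorem eq_smul_of_repr_eq_zero {u : M} {i : ι} (h : ∀ j ≠ i, b.repr u j = 0) :
    u = b.repr u i • b i := by
  have hsupp : (b.repr u).support ⊆ {i} := fun j hj =>
    Finset.mem_singleton.mpr (by_contra fun hji => Finsupp.mem_support_iff.mp hj (h j hji))
  rw [← b.repr_symm_single, ← Finsupp.eq_single_iff.mpr ⟨hsupp, rfl⟩, LinearEquiv.symm_apply_apply]

end Semiring

variable [CommRing R] [AddCommGroup M] [Module R M] (b : Basis ι R M)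

theorem repr_apply_of_apply_basis_eq_smul {f : M →ₗ[R] M} {μ : ι → R}
    (hf : ∀ i, f (b i) = μ i • b i) (u : M) (i : ι) : b.repr (f u) i = μ i * b.repr u i := by
  classical
  have h : Finsupp.lapply i ∘ₗ b.repr.toLinearMap ∘ₗ f
      = μ i • (Finsupp.lapply i ∘ₗ b.repr.toLinearMap) := b.ext fun j => by
    by_cases hji : j = i
    · subst hji; simp [hf]
    · simp [hf, hji]
  exact LinearMap.congr_fun h u

theorem repr_eq_zero_of_apply_eq_smul [NoZeroDivisors R] {f : M →ₗ[R] M} {μ : ι → R}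
    (hf : ∀ i, f (b i) = μ i • b i) {c : R} {u : M} (hu : f u = c • u) {i : ι} (hi : μ i ≠ c) :
    b.repr u i = 0 := by
  have h := b.repr_apply_of_apply_basis_eq_smul hf u i
  rw [hu, map_smul, Finsupp.smul_apply, smul_eq_mul] at h
  exact (mul_eq_mul_right_iff.mp h.symm).resolve_left hi

end Module.Basis

theorem eq_zero_of_two_mul_apply_add_eq {K : Type*} [Field K] [CharZero K] {a y : ℤ → K}
    (ha : a 0 = 0) (h : ∀ r s : ℤ, 2 * y (r + s) = a s * (s / 2 - r) + a r * (r / 2 - s))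
    (r : ℤ) : a r = 0 := by
  rcases eq_or_ne r 0 with rfl | hr
  · exact ha
  have h0 := h 0 0
  have h1 := h r 0
  have h2 := h r r
  have h3 := h r (-r)
  have h4 := h (2 * r) (-r)
  have h5 := h (2 * r) 0
  rw [add_zero, ha] at h1 h5
  rw [← two_mul] at h2
  rw [add_neg_cancel] at h3
  rw [show 2 * r + -r = r by ring] at h4
  push_cast at h0 h1 h2 h3 h4 h5
  have h' : (5 * r : K) * a r = 0 := by
    linear_combination h4 - h1 + 2 * h2 - 2 * h5 - (5 / 3) * h3 + (5 / 3) * h0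
  simpa [hr] using h'

namespace SVirAlgebra

abbrev Index : Type := (ℤ ⊕ Unit) ⊕ ℤ

def deg : Index → ℤ
  | .inl (.inl m) => m
  | .inl (.inr _) => 0
  | .inr r => r

@[simp] theorem deg_L (m : ℤ) : deg (.inl (.inl m)) = m := rfl

@[simp] theorem deg_G (r : ℤ) : deg (.inr r) = r := rfl

def parity : Index → ZMod 2
  | .inl _ => 0
  | .inr _ => 1

def sign (p : ZMod 2) : ℂ := if p = 1 then -1 else 1

@[simp] theorem sign_zero : sign 0 = 1 := by simp [sign]

@[simp] theorem sign_one : sign 1 = -1 := by simp [sign]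

theorem sign_add_one (p : ZMod 2) : sign (p + 1) = -sign p := by
  rcases (by decide : ∀ z : ZMod 2, z = 0 ∨ z = 1) p with rfl | rfl
  · simp
  · simp [sign, show (1 + 1 : ZMod 2) = 0 by decide]

theorem sign_ne_zero (p : ZMod 2) : sign p ≠ 0 := by
  unfold sign; split_ifs <;> norm_num

variable {V : Type} [AddCommGroup V] [Module ℂ V]

def parityPart (b : Module.Basis Index ℂ V) (p : ZMod 2) : Submodule ℂ V :=
  span ℂ (b '' {k | parity k = p})

theorem eq_parityPart {b : Module.Basis Index ℂ V} {Vsub : ZMod 2 → Submodule ℂ V}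
    (h0 : Vsub 0 = span ℂ (Set.range fun i : ℤ ⊕ Unit => b (Sum.inl i)))
    (h1 : Vsub 1 = span ℂ (Set.range fun j : ℤ => b (Sum.inr j))) :
    Vsub = parityPart b := by
  funext p
  rcases (by decide : ∀ z : ZMod 2, z = 0 ∨ z = 1) p with rfl | rfl
  · rw [h0, parityPart]; congr 1; ext v; simp [parity]
  · rw [h1, parityPart]; congr 1; ext v; simp [parity]

end SVirAlgebra

open SVirAlgebra in
structure SVirAlgebra (V : Type) [AddCommGroup V] [Module ℂ V] where
  b : Module.Basis Index ℂ V
  br : V →ₗ[ℂ] V →ₗ[ℂ] V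
  L : ℤ → V
  C : V
  G : ℤ → V
  L_eq : ∀ m : ℤ, L m = b (.inl (.inl m))
  C_eq : C = b (.inl (.inr ()))
  G_eq : ∀ r : ℤ, G r = b (.inr r)
  br_L_L : ∀ m n : ℤ, br (L m) (L n) = ((m : ℂ) - n) • L (m + n) +
    (if m + n = 0 then ((m : ℂ) ^ 3 - m) / 12 else 0) • C
  br_L_G : ∀ m r : ℤ, br (L m) (G r) = ((m : ℂ) / 2 - r) • G (m + r)
  br_G_G : ∀ r s : ℤ, br (G r) (G s) = (2 : ℂ) • L (r + s) +
    (if r + s = 0 then ((r : ℂ) ^ 2 - 1 / 4) / 3 else 0) • C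
  br_L_C : ∀ m : ℤ, br (L m) C = 0
  br_G_C : ∀ r : ℤ, br (G r) C = 0
  br_skew : ∀ p q : ZMod 2, ∀ x ∈ parityPart b p, ∀ y ∈ parityPart b q,
    br x y = (-(sign (p * q))) • br y x

namespace SVirAlgebra

variable {V : Type} [AddCommGroup V] [Module ℂ V] (A : SVirAlgebra V)

structure IsSymmSuperBiderivation (φ : V →ₗ[ℂ] V →ₗ[ℂ] V) (d : ZMod 2) : Prop where
  mem_parityPart : ∀ p q : ZMod 2, ∀ x ∈ parityPart A.b p, ∀ y ∈ parityPart A.b q,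
    φ x y ∈ parityPart A.b (p + q + d)
  apply_br_left : ∀ p q t : ZMod 2, ∀ x ∈ parityPart A.b p, ∀ y ∈ parityPart A.b q,
    ∀ z ∈ parityPart A.b t,
    φ (A.br x y) z = sign (d * p) • A.br x (φ y z) - sign (q * (d + p)) • A.br y (φ x z)
  apply_br_right : ∀ p q t : ZMod 2, ∀ x ∈ parityPart A.b p, ∀ y ∈ parityPart A.b q,
    ∀ z ∈ parityPart A.b t,
    φ x (A.br y z) = sign ((d + p) * q) • A.br y (φ x z) - sign (t * (d + p + q)) • A.br z (φ x y)
  symm : ∀ p q : ZMod 2, ∀ x ∈ parityPart A.b p, ∀ y ∈ parityPart A.b q,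
    φ x y = sign (p * q) • φ y x

theorem basis_mem_parityPart (k : Index) : A.b k ∈ parityPart A.b (parity k) :=
  subset_span ⟨k, rfl, rfl⟩

theorem L_mem (m : ℤ) : A.L m ∈ parityPart A.b 0 := by
  rw [A.L_eq]; exact A.basis_mem_parityPart (.inl (.inl m))

theorem C_mem : A.C ∈ parityPart A.b 0 := by
  rw [A.C_eq]; exact A.basis_mem_parityPart (.inl (.inr ()))

theorem G_mem (r : ℤ) : A.G r ∈ parityPart A.b 1 := by
  rw [A.G_eq]; exact A.basis_mem_parityPart (.inr r)

theorem repr_eq_zero_of_mem_parityPart {p : ZMod 2} {u : V} (hu : u ∈ parityPart A.b p)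
    {k : Index} (hk : parity k ≠ p) : A.b.repr u k = 0 :=
  A.b.repr_eq_zero_of_mem_span_image hu hk

theorem L_ne_zero (m : ℤ) : A.L m ≠ 0 := by rw [A.L_eq]; exact A.b.ne_zero _

theorem G_ne_zero (r : ℤ) : A.G r ≠ 0 := by rw [A.G_eq]; exact A.b.ne_zero _

theorem br_G_L (r s : ℤ) : A.br (A.G r) (A.L s) = -((s : ℂ) / 2 - r) • A.G (s + r) := by
  rw [A.br_skew 1 0 _ (A.G_mem r) _ (A.L_mem s), mul_zero, sign_zero, A.br_L_G, smul_smul]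
  ring_nf

theorem linearMap_ext {W : Type*} [AddCommGroup W] [Module ℂ W] {f g : V →ₗ[ℂ] W}
    (hL : ∀ m, f (A.L m) = g (A.L m)) (hC : f A.C = g A.C) (hG : ∀ r, f (A.G r) = g (A.G r)) :
    f = g :=
  A.b.ext fun
    | .inl (.inl m) => A.L_eq m ▸ hL m
    | .inl (.inr ()) => A.C_eq ▸ hC
    | .inr r => A.G_eq r ▸ hG r

theorem br_C (x : V) : A.br x A.C = 0 := by
  have hCC : A.br A.C A.C = 0 := by
    have h := A.br_skew 0 0 _ A.C_mem _ A.C_mem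
    rw [mul_zero, sign_zero] at h
    have := IsAddTorsionFree.of_isTorsionFree ℂ V
    exact self_eq_neg.mp (h.trans (neg_one_smul ℂ _))
  have h : A.br.flip A.C = 0 := A.linearMap_ext A.br_L_C hCC A.br_G_C
  exact LinearMap.congr_fun h x

theorem C_br (y : V) : A.br A.C y = 0 := by
  have h : A.br A.C = 0 := A.linearMap_ext
    (fun m => by rw [A.br_skew 0 0 _ A.C_mem _ (A.L_mem m), A.br_C, smul_zero]; rfl)
    (A.br_C _)
    (fun r => by rw [A.br_skew 0 1 _ A.C_mem _ (A.G_mem r), A.br_C, smul_zero]; rfl)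
  exact LinearMap.congr_fun h y

theorem br_L_zero_basis (k : Index) : A.br (A.L 0) (A.b k) = -(deg k : ℂ) • A.b k := by
  rcases k with (m | ⟨⟩) | r
  · rw [← A.L_eq, A.br_L_L]; simp [deg]
  · rw [← A.C_eq, A.br_L_C]; simp [deg]
  · rw [← A.G_eq, A.br_L_G]; simp [deg]

theorem br_basis_L_zero (k : Index) : A.br (A.b k) (A.L 0) = (deg k : ℂ) • A.b k := by
  rw [A.br_skew _ 0 _ (A.basis_mem_parityPart k) _ (A.L_mem 0), mul_zero, sign_zero,
    A.br_L_zero_basis, smul_smul]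
  simp

theorem repr_eq_zero_of_br_L_zero_eq {n : ℤ} {u : V} (hu : A.br (A.L 0) u = -(n : ℂ) • u)
    {k : Index} (hk : deg k ≠ n) : A.b.repr u k = 0 :=
  A.b.repr_eq_zero_of_apply_eq_smul A.br_L_zero_basis hu (by simpa using hk)

theorem exists_eq_smul_L_of_br_L_zero_eq {n : ℤ} (hn : n ≠ 0) {u : V}
    (hu : A.br (A.L 0) u = -(n : ℂ) • u) (hp : u ∈ parityPart A.b 0) : ∃ c : ℂ, u = c • A.L n := by
  rw [A.L_eq]
  refine ⟨_, A.b.eq_smul_of_repr_eq_zero ?_⟩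
  rintro ((m | ⟨⟩) | r) hk
  · exact A.repr_eq_zero_of_br_L_zero_eq hu (by simpa [deg] using hk)
  · exact A.repr_eq_zero_of_br_L_zero_eq hu (Ne.symm hn)
  · exact A.repr_eq_zero_of_mem_parityPart hp (by simp [parity])

theorem exists_eq_smul_G_of_br_L_zero_eq {r : ℤ} {u : V}
    (hu : A.br (A.L 0) u = -(r : ℂ) • u) (hp : u ∈ parityPart A.b 1) : ∃ c : ℂ, u = c • A.G r := by
  rw [A.G_eq]
  refine ⟨_, A.b.eq_smul_of_repr_eq_zero ?_⟩
  rintro ((m | ⟨⟩) | s) hk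
  · exact A.repr_eq_zero_of_mem_parityPart hp (by simp [parity])
  · exact A.repr_eq_zero_of_mem_parityPart hp (by simp [parity])
  · exact A.repr_eq_zero_of_br_L_zero_eq hu (by simpa [deg] using hk)

theorem span_br_basis_eq_top :
    span ℂ (Set.range fun kl : Index × Index => A.br (A.b kl.1) (A.b kl.2)) = ⊤ := by
  set S := span ℂ (Set.range fun kl : Index × Index => A.br (A.b kl.1) (A.b kl.2))
  have hLL (m n : ℤ) : A.br (A.L m) (A.L n) ∈ S := by
    rw [A.L_eq, A.L_eq]; exact subset_span ⟨(_, _), rfl⟩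
  have hLG (m r : ℤ) : A.br (A.L m) (A.G r) ∈ S := by
    rw [A.L_eq, A.G_eq]; exact subset_span ⟨(_, _), rfl⟩
  have hGG (r s : ℤ) : A.br (A.G r) (A.G s) ∈ S := by
    rw [A.G_eq, A.G_eq]; exact subset_span ⟨(_, _), rfl⟩
  have hL : ∀ m, A.L m ∈ S := by
    intro m
    rcases eq_or_ne m 0 with rfl | hm
    · have h : A.L 0 = (1 / 2 : ℂ) • A.br (A.L 1) (A.L (-1)) := by
        rw [A.br_L_L]; norm_num; module
      exact h ▸ S.smul_mem _ (hLL 1 (-1))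
    · have h : A.L m = (m : ℂ)⁻¹ • A.br (A.L m) (A.L 0) := by
        rw [A.br_L_L]; simp [hm]
      exact h ▸ S.smul_mem _ (hLL m 0)
  have hC : A.C ∈ S := by
    have h : A.C = (12 : ℂ) • (A.br (A.L 1) (A.L (-1)) - A.br (A.G 0) (A.G 0)) := by
      rw [A.br_L_L, A.br_G_G]; norm_num; module
    exact h ▸ S.smul_mem _ (S.sub_mem (hLL 1 (-1)) (hGG 0 0))
  have hG : ∀ r, A.G r ∈ S := by
    intro r
    have hr : (3 / 2 - r : ℂ) ≠ 0 := by
      intro h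
      have h' : ((2 * r : ℤ) : ℂ) = (3 : ℤ) := by push_cast; linear_combination -2 * h
      have := Int.cast_injective h'
      omega
    have h : A.G r = (3 / 2 - r : ℂ)⁻¹ • A.br (A.L 1) (A.G (r - 1)) := by
      rw [A.br_L_G, show 1 + (r - 1) = r by ring, smul_smul]
      push_cast
      rw [show (1 / 2 - (r - 1) : ℂ) = 3 / 2 - r by ring, inv_mul_cancel₀ hr, one_smul]
    exact h ▸ S.smul_mem _ (hLG 1 (r - 1))
  rw [eq_top_iff, ← A.b.span_eq, span_le]
  rintro _ ⟨(m | ⟨⟩) | r, rfl⟩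
  · exact A.L_eq m ▸ hL m
  · exact A.C_eq ▸ hC
  · exact A.G_eq r ▸ hG r

namespace IsSymmSuperBiderivation

variable {A} {φ : V →ₗ[ℂ] V →ₗ[ℂ] V} {d : ZMod 2}

theorem br_apply_C (hφ : A.IsSymmSuperBiderivation φ d) {p : ZMod 2} {x : V}
    (hx : x ∈ parityPart A.b p) (y : V) : A.br y (φ x A.C) = 0 := by
  have key : ∀ {q : ZMod 2} {y : V}, y ∈ parityPart A.b q → A.br y (φ x A.C) = 0 := by
    intro q y hy
    have h := hφ.apply_br_right p q 0 x hx y hy A.C A.C_mem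
    rw [A.br_C, map_zero, A.C_br, smul_zero, sub_zero, eq_comm, smul_eq_zero] at h
    exact h.resolve_left (sign_ne_zero _)
  have h : A.br.flip (φ x A.C) = 0 :=
    A.linearMap_ext (fun m => key (A.L_mem m)) (key A.C_mem) (fun r => key (A.G_mem r))
  exact LinearMap.congr_fun h y

theorem apply_br_C (hφ : A.IsSymmSuperBiderivation φ d) {p q : ZMod 2} {x y : V}
    (hx : x ∈ parityPart A.b p) (hy : y ∈ parityPart A.b q) : φ (A.br x y) A.C = 0 := by
  rw [hφ.apply_br_left p q 0 x hx y hy A.C A.C_mem, hφ.br_apply_C hy, hφ.br_apply_C hx, smul_zero,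
    smul_zero, sub_zero]

theorem apply_C (hφ : A.IsSymmSuperBiderivation φ d) (x : V) : φ x A.C = 0 := by
  have h : φ.flip A.C = 0 := by
    rw [← LinearMap.ker_eq_top, eq_top_iff, ← A.span_br_basis_eq_top, span_le]
    rintro _ ⟨⟨k, l⟩, rfl⟩
    exact hφ.apply_br_C (A.basis_mem_parityPart k) (A.basis_mem_parityPart l)
  exact LinearMap.congr_fun h x

theorem C_apply (hφ : A.IsSymmSuperBiderivation φ d) {q : ZMod 2} {y : V}
    (hy : y ∈ parityPart A.b q) : φ A.C y = 0 := by
  rw [hφ.symm 0 q _ A.C_mem _ hy, hφ.apply_C, smul_zero]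

theorem G_zero_apply_G_zero (hφ : A.IsSymmSuperBiderivation φ d) : φ (A.G 0) (A.G 0) = 0 := by
  have h := hφ.symm 1 1 _ (A.G_mem 0) _ (A.G_mem 0)
  rw [mul_one, sign_one, neg_one_smul] at h
  have := IsAddTorsionFree.of_isTorsionFree ℂ V
  exact self_eq_neg.mp h

theorem L_zero_apply_eq (hφ : A.IsSymmSuperBiderivation φ d) {t : ZMod 2} {z : V}
    (hz : z ∈ parityPart A.b t) : φ (A.L 0) z = sign d • A.br (A.G 0) (φ (A.G 0) z) := by
  have h := hφ.apply_br_left 1 1 t _ (A.G_mem 0) _ (A.G_mem 0) z hz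
  rw [A.br_G_G, map_add, map_smul, map_smul, LinearMap.add_apply, LinearMap.smul_apply,
    LinearMap.smul_apply, hφ.C_apply hz, smul_zero, add_zero, mul_one, one_mul, sign_add_one,
    add_zero] at h
  have h2 : (2 : ℂ) • φ (A.L 0) z = (2 : ℂ) • (sign d • A.br (A.G 0) (φ (A.G 0) z)) := by
    rw [h]; module
  exact smul_right_injective V two_ne_zero h2

theorem L_zero_apply_G_zero (hφ : A.IsSymmSuperBiderivation φ d) : φ (A.L 0) (A.G 0) = 0 := by
  rw [hφ.L_zero_apply_eq (A.G_mem 0), hφ.G_zero_apply_G_zero, map_zero, smul_zero]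

theorem L_zero_apply_L_zero (hφ : A.IsSymmSuperBiderivation φ d) : φ (A.L 0) (A.L 0) = 0 := by
  rw [hφ.L_zero_apply_eq (A.L_mem 0), hφ.symm 1 0 _ (A.G_mem 0) _ (A.L_mem 0), mul_zero,
    sign_zero, one_smul, hφ.L_zero_apply_G_zero, map_zero, smul_zero]

theorem br_L_zero_L_zero_apply_basis (hφ : A.IsSymmSuperBiderivation φ d) (k : Index) :
    A.br (A.L 0) (φ (A.L 0) (A.b k)) = -(deg k : ℂ) • φ (A.L 0) (A.b k) := by
  have h := hφ.apply_br_right 0 _ 0 _ (A.L_mem 0) _ (A.basis_mem_parityPart k) _ (A.L_mem 0)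
  rw [A.br_basis_L_zero, hφ.L_zero_apply_L_zero, map_zero, smul_zero, zero_sub, zero_mul,
    sign_zero, one_smul, map_smul] at h
  rw [neg_smul, h, neg_neg]

theorem two_smul_L_zero_apply_L_add (hφ : A.IsSymmSuperBiderivation φ d) (r s : ℤ) :
    (2 : ℂ) • φ (A.L 0) (A.L (r + s)) =
      sign d • (A.br (A.G r) (φ (A.L 0) (A.G s)) + A.br (A.G s) (φ (A.L 0) (A.G r))) := by
  have h := hφ.apply_br_right 0 1 1 _ (A.L_mem 0) _ (A.G_mem r) _ (A.G_mem s)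
  rw [A.br_G_G, map_add, map_smul, map_smul, hφ.apply_C, smul_zero, add_zero, add_zero, mul_one,
    one_mul, sign_add_one] at h
  rw [h]; module

theorem apply_basis_eq_zero_of_deg_ne (hφ : A.IsSymmSuperBiderivation φ d)
    (h0 : φ (A.L 0) = 0) {k l : Index} (hkl : deg k ≠ deg l) : φ (A.b k) (A.b l) = 0 := by
  have hk := A.basis_mem_parityPart k
  have hl := A.basis_mem_parityPart l
  have e1 := hφ.apply_br_left 0 _ _ _ (A.L_mem 0) _ hk _ hl
  rw [A.br_L_zero_basis, h0, LinearMap.zero_apply, map_zero, smul_zero, sub_zero, mul_zero,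
    sign_zero, one_smul, map_smul, LinearMap.smul_apply] at e1
  have e2 := hφ.apply_br_right _ _ 0 _ hk _ hl _ (A.L_mem 0)
  rw [A.br_basis_L_zero, hφ.symm _ 0 _ hk _ (A.L_mem 0), h0, LinearMap.zero_apply, smul_zero,
    map_zero, smul_zero, zero_sub, zero_mul, sign_zero, one_smul, map_smul] at e2
  have h : ((deg l : ℂ) - deg k) • φ (A.b k) (A.b l) = 0 := by
    linear_combination (norm := module) e1 + e2
  exact (smul_eq_zero.mp h).resolve_left (sub_ne_zero.mpr (by exact_mod_cast hkl.symm))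

theorem apply_eq_zero_of_br_L_eq (hφ : A.IsSymmSuperBiderivation φ d) {p t : ZMod 2}
    {x z w : V} (hx : x ∈ parityPart A.b p) (hz : z ∈ parityPart A.b t) {m : ℤ} {c c' : ℂ}
    (hc : c ≠ 0) (hbr : A.br (A.L m) z = c • w + c' • A.C) (hxL : φ x (A.L m) = 0)
    (hxz : φ x z = 0) : φ x w = 0 := by
  have h := hφ.apply_br_right p 0 t _ hx _ (A.L_mem m) _ hz
  rw [hbr, hxz, hxL, map_add, map_smul, map_smul, hφ.apply_C, map_zero, map_zero, smul_zero,
    smul_zero, smul_zero, add_zero, sub_zero] at h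
  exact (smul_eq_zero.mp h).resolve_left hc

theorem apply_basis_eq_zero (hφ : A.IsSymmSuperBiderivation φ d) (h0 : φ (A.L 0) = 0)
    (k l : Index) : φ (A.b k) (A.b l) = 0 := by
  rcases ne_or_eq (deg k) (deg l) with hkl | hkl
  · exact hφ.apply_basis_eq_zero_of_deg_ne h0 hkl
  -- `L m` and the second factor of `[L m, ·]` below have weights other than `deg k`, and the
  -- structure constants `2m - deg l`, `(3m - 2 deg l) / 2` of these brackets do not vanish.
  obtain ⟨m, hm0, hml, h2m, h3m⟩ :
      ∃ m : ℤ, m ≠ 0 ∧ m ≠ deg l ∧ 2 * m ≠ deg l ∧ 3 * m ≠ 2 * deg l := by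
    rcases lt_or_ge 0 (deg l) with h | h
    · exact ⟨-1, by omega, by omega, by omega, by omega⟩
    · exact ⟨1, by omega, by omega, by omega, by omega⟩
  have hk := A.basis_mem_parityPart k
  have hkL : φ (A.b k) (A.L m) = 0 := by
    rw [A.L_eq]; exact hφ.apply_basis_eq_zero_of_deg_ne h0 (by rw [deg_L]; omega)
  rcases l with (n | ⟨⟩) | r
  · have hkz : φ (A.b k) (A.L (n - m)) = 0 := by
      rw [A.L_eq]; exact hφ.apply_basis_eq_zero_of_deg_ne h0 (by rw [deg_L] at *; omega)
    obtain ⟨c', hbr⟩ : ∃ c' : ℂ,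
        A.br (A.L m) (A.L (n - m)) = ((2 * m - n : ℤ) : ℂ) • A.L n + c' • A.C :=
      ⟨_, by rw [A.br_L_L, add_sub_cancel]; congr 2; push_cast; ring⟩
    rw [← A.L_eq]
    exact hφ.apply_eq_zero_of_br_L_eq hk (A.L_mem _) (by exact_mod_cast sub_ne_zero.mpr h2m)
      hbr hkL hkz
  · rw [← A.C_eq]; exact hφ.apply_C _
  · have hkz : φ (A.b k) (A.G (r - m)) = 0 := by
      rw [A.G_eq]; exact hφ.apply_basis_eq_zero_of_deg_ne h0 (by rw [deg_G] at *; omega)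
    have hbr :
        A.br (A.L m) (A.G (r - m)) = ((3 * m - 2 * r : ℤ) / 2 : ℂ) • A.G r + (0 : ℂ) • A.C := by
      rw [A.br_L_G, add_sub_cancel, zero_smul, add_zero]; congr 1; push_cast; ring
    rw [← A.G_eq]
    refine hφ.apply_eq_zero_of_br_L_eq hk (A.G_mem _) ?_ hbr hkL hkz
    exact div_ne_zero (by exact_mod_cast sub_ne_zero.mpr h3m) two_ne_zero

theorem eq_zero_of_L_zero_apply (hφ : A.IsSymmSuperBiderivation φ d) (h0 : φ (A.L 0) = 0) :
    φ = 0 :=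
  A.b.ext fun k => A.b.ext fun l => hφ.apply_basis_eq_zero h0 k l

theorem exists_L_zero_apply_eq_of_even (hφ : A.IsSymmSuperBiderivation φ 0) :
    ∃ c : ℂ, ∀ n : ℤ,
      φ (A.L 0) (A.L n) = (n * c) • A.L n ∧ φ (A.L 0) (A.G n) = (n * c) • A.G n := by
  have hL : ∀ n : ℤ, ∃ c : ℂ, φ (A.L 0) (A.L n) = c • A.L n := by
    intro n
    rcases eq_or_ne n 0 with rfl | hn
    · exact ⟨0, by rw [hφ.L_zero_apply_L_zero, zero_smul]⟩
    · refine A.exists_eq_smul_L_of_br_L_zero_eq hn ?_ ?_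
      · rw [A.L_eq n]; exact hφ.br_L_zero_L_zero_apply_basis (.inl (.inl n))
      · simpa using hφ.mem_parityPart 0 0 _ (A.L_mem 0) _ (A.L_mem n)
  have hG : ∀ r : ℤ, ∃ c : ℂ, φ (A.L 0) (A.G r) = c • A.G r := fun r =>
    A.exists_eq_smul_G_of_br_L_zero_eq
      (by rw [A.G_eq]; exact hφ.br_L_zero_L_zero_apply_basis (.inr r))
      (by simpa using hφ.mem_parityPart 0 1 _ (A.L_mem 0) _ (A.G_mem r))
  choose x hx using hL
  choose g hg using hG
  have hg0 : g 0 = 0 := by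
    have h := hg 0
    rw [hφ.L_zero_apply_G_zero, eq_comm, smul_eq_zero] at h
    exact h.resolve_right (A.G_ne_zero 0)
  have hadd : ∀ r s : ℤ, x (r + s) = g r + g s := by
    intro r s
    have h := hφ.two_smul_L_zero_apply_L_add r s
    rw [hx, hg, hg, map_smul, map_smul, A.br_G_G, A.br_G_G, sign_zero, one_smul,
      add_comm s r] at h
    have hLL : A.b.coord (.inl (.inl (r + s))) (A.L (r + s)) = 1 := by simp [A.L_eq]
    have hLC : A.b.coord (.inl (.inl (r + s))) A.C = 0 := by simp [A.C_eq]
    have h' := congrArg (A.b.coord (.inl (.inl (r + s)))) h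
    simp only [map_add, map_smul, smul_eq_mul, hLL, hLC] at h'
    linear_combination h' / 2
  have hgx : ∀ r, g r = x r := fun r => by simpa [hg0] using (hadd r 0).symm
  have hlin : ∀ n : ℤ, x n = n * x 1 := fun n => by
    simpa [zsmul_eq_mul] using
      AddMonoidHom.apply_int ℂ (.mk' x fun r s => by rw [hadd, hgx, hgx]) n
  exact ⟨x 1, fun n => ⟨by rw [hx, hlin], by rw [hg, hgx, hlin]⟩⟩

theorem L_zero_apply_eq_zero_of_even (hφ : A.IsSymmSuperBiderivation φ 0) :
    φ (A.L 0) = 0 := by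
  obtain ⟨c, hc⟩ := hφ.exists_L_zero_apply_eq_of_even
  have e1 := hφ.apply_br_left 0 0 0 _ (A.L_mem 0) _ (A.L_mem 1) _ (A.L_mem 2)
  have e2 := hφ.apply_br_right 0 0 0 _ (A.L_mem 1) _ (A.L_mem 2) _ (A.L_mem 0)
  rw [hφ.symm 0 0 _ (A.L_mem 1) _ (A.L_mem 0)] at e2
  -- Together `e1` and `e2` determine `φ (L 1) (L 2) = 3c L 3`; fed back into `e1` this is
  -- `4c L 3 = 0`.
  have h01 : A.br (A.L 0) (A.L 1) = -A.L 1 := by rw [A.br_L_L]; norm_num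
  have h20 : A.br (A.L 2) (A.L 0) = (2 : ℂ) • A.L 2 := by rw [A.br_L_L]; norm_num
  have h12 : A.br (A.L 1) (A.L 2) = -A.L 3 := by rw [A.br_L_L]; norm_num
  have h21 : A.br (A.L 2) (A.L 1) = A.L 3 := by rw [A.br_L_L]; norm_num
  have h03 : A.br (A.L 0) (A.L 3) = (-3 : ℂ) • A.L 3 := by rw [A.br_L_L]; norm_num
  simp only [mul_zero, add_zero, sign_zero, one_smul, h01, h20, map_neg, map_smul,
    LinearMap.neg_apply, (hc 1).1, (hc 2).1, h12, h21] at e1 e2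
  have hX : φ (A.L 1) (A.L 2) = (3 * c) • A.L 3 := by
    push_cast at e1 e2
    linear_combination (norm := module) e1 + e2
  rw [hX, map_smul, h03] at e1
  push_cast at e1
  have h4 : (4 * c) • A.L 3 = 0 := by linear_combination (norm := module) e1
  have hc0 : c = 0 := by
    simpa using (smul_eq_zero.mp h4).resolve_right (A.L_ne_zero 3)
  exact A.linearMap_ext (fun n => by simp [(hc n).1, hc0]) (hφ.apply_C _)
    (fun r => by simp [(hc r).2, hc0])

theorem L_zero_apply_eq_zero_of_odd (hφ : A.IsSymmSuperBiderivation φ 1) :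
    φ (A.L 0) = 0 := by
  have hL : ∀ n : ℤ, ∃ c : ℂ, φ (A.L 0) (A.L n) = c • A.G n := fun n =>
    A.exists_eq_smul_G_of_br_L_zero_eq
      (by rw [A.L_eq n]; exact hφ.br_L_zero_L_zero_apply_basis (.inl (.inl n)))
      (by simpa using hφ.mem_parityPart 0 0 _ (A.L_mem 0) _ (A.L_mem n))
  have hG : ∀ r : ℤ, ∃ c : ℂ, φ (A.L 0) (A.G r) = c • A.L r := by
    intro r
    rcases eq_or_ne r 0 with rfl | hr
    · exact ⟨0, by rw [hφ.L_zero_apply_G_zero, zero_smul]⟩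
    · refine A.exists_eq_smul_L_of_br_L_zero_eq hr ?_ ?_
      · rw [A.G_eq]; exact hφ.br_L_zero_L_zero_apply_basis (.inr r)
      · simpa [show (1 + 1 : ZMod 2) = 0 by decide] using
          hφ.mem_parityPart 0 1 _ (A.L_mem 0) _ (A.G_mem r)
  choose y hy using hL
  choose a ha using hG
  have ha0 : a 0 = 0 := by
    have h := ha 0
    rw [hφ.L_zero_apply_G_zero, eq_comm, smul_eq_zero] at h
    exact h.resolve_right (A.L_ne_zero 0)
  have hrel : ∀ r s : ℤ, 2 * y (r + s) = a s * (s / 2 - r) + a r * (r / 2 - s) := by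
    intro r s
    have h := hφ.two_smul_L_zero_apply_L_add r s
    rw [hy, ha, ha, map_smul, map_smul, A.br_G_L, A.br_G_L, sign_one, add_comm s r] at h
    refine smul_left_injective ℂ (A.G_ne_zero (r + s)) ?_
    change (2 * y (r + s)) • A.G (r + s) = (a s * (s / 2 - r) + a r * (r / 2 - s)) • A.G (r + s)
    rw [mul_smul, h]
    module
  have hazero := eq_zero_of_two_mul_apply_add_eq ha0 hrel
  have hyzero : ∀ n, y n = 0 := fun n => by simpa [ha0, hazero n] using hrel n 0
  exact A.linearMap_ext (fun n => by simp [hy, hyzero]) (hφ.apply_C _)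
    (fun r => by simp [ha, hazero])

theorem eq_zero (hφ : A.IsSymmSuperBiderivation φ d) : φ = 0 := by
  refine hφ.eq_zero_of_L_zero_apply ?_
  rcases (by decide : ∀ z : ZMod 2, z = 0 ∨ z = 1) d with rfl | rfl
  · exact hφ.L_zero_apply_eq_zero_of_even
  · exact hφ.L_zero_apply_eq_zero_of_odd

end IsSymmSuperBiderivation

end SVirAlgebra

theorem symmetric_superbiderivation_SVir_trivial
    (V : Type) [AddCommGroup V] [Module ℂ V]
    (bV : Module.Basis ((ℤ ⊕ Unit) ⊕ ℤ) ℂ V)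
    (br : V →ₗ[ℂ] V →ₗ[ℂ] V)
    (L : ℤ → V) (Cc : V) (G : ℤ → V)
    (hLdef : ∀ m : ℤ, L m = bV (Sum.inl (Sum.inl m)))
    (hCdef : Cc = bV (Sum.inl (Sum.inr ())))
    (hGdef : ∀ r : ℤ, G r = bV (Sum.inr r))
    (Vsub : ZMod 2 → Submodule ℂ V)
    (hV0 : Vsub 0 = Submodule.span ℂ (Set.range (fun i : ℤ ⊕ Unit => bV (Sum.inl i))))
    (hV1 : Vsub 1 = Submodule.span ℂ (Set.range (fun j : ℤ => bV (Sum.inr j))))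
    (sgn : ZMod 2 → ℂ) (hsgn : ∀ p : ZMod 2, sgn p = if p = 1 then -1 else 1)
    (hLL : ∀ m n : ℤ, br (L m) (L n) = ((m : ℂ) - n) • L (m + n) +
      (if m + n = 0 then ((m : ℂ) ^ 3 - m) / 12 else 0) • Cc)
    (hLG : ∀ m r : ℤ, br (L m) (G r) = ((m : ℂ) / 2 - r) • G (m + r))
    (hGG : ∀ r s : ℤ, br (G r) (G s) = (2 : ℂ) • L (r + s) +
      (if r + s = 0 then ((r : ℂ) ^ 2 - 1 / 4) / 3 else 0) • Cc)
    (hLC : ∀ m : ℤ, br (L m) Cc = 0)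
    (hGC : ∀ r : ℤ, br (G r) Cc = 0)
    (hskew : ∀ p q : ZMod 2, ∀ x ∈ Vsub p, ∀ y ∈ Vsub q,
      br x y = (-(sgn (p * q))) • br y x)
    (φ : V →ₗ[ℂ] V →ₗ[ℂ] V) (d : ZMod 2)
    (hhom : ∀ p q : ZMod 2, ∀ x ∈ Vsub p, ∀ y ∈ Vsub q, φ x y ∈ Vsub (p + q + d))
    (hbd1 : ∀ p q t : ZMod 2, ∀ x ∈ Vsub p, ∀ y ∈ Vsub q, ∀ z ∈ Vsub t,
      φ (br x y) z = sgn (d * p) • br x (φ y z) - sgn (q * (d + p)) • br y (φ x z))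
    (hbd2 : ∀ p q t : ZMod 2, ∀ x ∈ Vsub p, ∀ y ∈ Vsub q, ∀ z ∈ Vsub t,
      φ x (br y z) = sgn ((d + p) * q) • br y (φ x z) - sgn (t * (d + p + q)) • br z (φ x y))
    (hsym : ∀ p q : ZMod 2, ∀ x ∈ Vsub p, ∀ y ∈ Vsub q, φ x y = sgn (p * q) • φ y x) :
    ∀ x y : V, φ x y = 0 := by
  obtain rfl : sgn = SVirAlgebra.sign := funext hsgn
  obtain rfl : Vsub = SVirAlgebra.parityPart bV := SVirAlgebra.eq_parityPart hV0 hV1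
  let A : SVirAlgebra V :=
    ⟨bV, br, L, Cc, G, hLdef, hCdef, hGdef, hLL, hLG, hGG, hLC, hGC, hskew⟩
  have hφ : A.IsSymmSuperBiderivation φ d := ⟨hhom, hbd1, hbd2, hsym⟩
  intro x y
  rw [hφ.eq_zero, LinearMap.zero_apply, LinearMap.zero_apply]
end
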